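/- arXiv:1506.02438 — 3 statements merged into one kernel-verified Lean document; each statement's English description precedes it below -/
import Mathlib

section
/- The exponentially-weighted average of the k-step advantage estimators equals a discounted sum of TD residuals: (1-λ)·∑_{k=1}^∞ λ^{k-1} Â_t^{(k)} = ∑_{l=0}^∞ (γλ)^l δ_{t+l}, where Â_t^{(k)} = ∑_{l=0}^{k-1} γ^l δ_{t+l}, for 0 ≤ λ < 1 and a bounded sequence δ. -/
set_option maxHeartbeats 1000000

/-- The exponentially-weighted average of the k-step advantage estimators
`Â_t^{(k)} = ∑_{l=0}^{k-1} γ^l δ_{t+l}` with weights `(1-λ)λ^{k-1}` equals the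
discounted sum of TD residuals `∑_{l=0}^∞ (γλ)^l δ_{t+l}`. -/
theorem gae_weighted_average_eq_discounted_td_sum
    (γ lam : ℝ) (hγ0 : 0 ≤ γ) (hγ1 : γ ≤ 1) (hlam0 : 0 ≤ lam) (hlam1 : lam < 1)
    (δ : ℕ → ℝ) (M : ℝ) (hδ : ∀ n, |δ n| ≤ M) (t : ℕ) :
    HasSum (fun k : ℕ => (1 - lam) * lam ^ k *
        (∑ l ∈ Finset.range (k + 1), γ ^ l * δ (t + l)))
      (∑' l : ℕ, (γ * lam) ^ l * δ (t + l)) := by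
  set a : ℕ → ℝ := fun l => (γ * lam) ^ l * δ (t + l) with ha
  set b : ℕ → ℝ := fun m => (1 - lam) * lam ^ m with hb
  have hgl0 : 0 ≤ γ * lam := mul_nonneg hγ0 hlam0
  have hgl1 : γ * lam < 1 := lt_of_le_of_lt
    (mul_le_of_le_one_left hlam0 hγ1) hlam1
  have hM0 : 0 ≤ M := le_trans (abs_nonneg _) (hδ 0)
  have hsa : Summable fun l => ‖a l‖ := by
    refine Summable.of_nonneg_of_le (fun n => norm_nonneg _) (fun l => ?_)
      ((summable_geometric_of_lt_one hgl0 hgl1).mul_right M)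
    simp only [ha, Real.norm_eq_abs, abs_mul, abs_pow, abs_of_nonneg hgl0]
    exact mul_le_mul_of_nonneg_left (hδ _) (pow_nonneg hgl0 _)
  have hsb : Summable fun m => ‖b m‖ := by
    apply Summable.of_norm
    simp only [hb, norm_norm]
    exact ((summable_geometric_of_lt_one hlam0 hlam1).mul_left _).norm
  have key : ∀ k : ℕ, (1 - lam) * lam ^ k *
      (∑ l ∈ Finset.range (k + 1), γ ^ l * δ (t + l))
      = ∑ l ∈ Finset.range (k + 1), a l * b (k - l) := by
    intro k
    rw [Finset.mul_sum]
    apply Finset.sum_congr rfl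
    intro l hl
    have hlk : l ≤ k := Nat.lt_succ_iff.mp (Finset.mem_range.mp hl)
    simp only [ha, hb, mul_pow]
    have : lam ^ k = lam ^ l * lam ^ (k - l) := by
      rw [← pow_add, Nat.add_sub_cancel' hlk]
    rw [this]; ring
  have hsum : Summable fun k : ℕ => ∑ l ∈ Finset.range (k + 1), a l * b (k - l) :=
    (summable_norm_sum_mul_range_of_summable_norm hsa hsb).of_norm
  have hbsum : ∑' m, b m = 1 := by
    simp only [hb]
    rw [tsum_mul_left, tsum_geometric_of_lt_one hlam0 hlam1]
    exact mul_inv_cancel₀ (by linarith)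
  have := hsum.hasSum
  rw [← tsum_mul_tsum_eq_tsum_sum_range_of_summable_norm hsa hsb, hbsum, mul_one] at this
  simpa only [key] using this
end

section
/- In a finite MDP, if an advantage estimator decomposes as Â_t = Q_t - b_t where b_t depends only on (s_{0:t}, a_{0:t-1}) and Q_t satisfies E[Q_t | s_t, a_t, history up to t] = Q^{π,γ}(s_t, a_t), then E[Â_t · ∇_θ log π_θ(a_t|s_t)] = E[A^{π,γ}(s_t, a_t) · ∇_θ log π_θ(a_t|s_t)], i.e., Â_t is γ-just. -/
open Finset

/-- Density of a length-`T` trajectory `ω = (s_{0:T}, a_{0:T})` under initial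
distribution `ρ`, policy `pol θ` and transition kernel `P`. -/
def trajDensity {S A : Type*} (ρ : S → ℝ) (P : S → A → S → ℝ) (pol : ℝ → S → A → ℝ)
    (θ : ℝ) (T : ℕ) (ω : (Fin (T + 1) → S) × (Fin (T + 1) → A)) : ℝ :=
  ρ (ω.1 0) * (∏ i, pol θ (ω.1 i) (ω.2 i)) *
    ∏ i : Fin T, P (ω.1 i.castSucc) (ω.2 i.castSucc) (ω.1 i.succ)

/-- Discounted state-action value function `Q^{π,γ}` with remaining horizon `k`:
`Q_k(s,a) = E[∑_{l<k} γ^l r_{t+l} | s_t = s, a_t = a]` under policy `pol θ`. -/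
def Qhor {S A : Type*} [Fintype S] [Fintype A] (P : S → A → S → ℝ)
    (rew : S → A → S → ℝ) (pol : ℝ → S → A → ℝ) (θ γ : ℝ) : ℕ → S → A → ℝ
  | 0, _, _ => 0
  | (k + 1), s, a =>
      ∑ s', P s a s' * (rew s a s' + γ * ∑ a', pol θ s' a' * Qhor P rew pol θ γ k s' a')

/-!
Write `Â_t = Q_t - b_t`. Grouping trajectories by their history up to `(s_t, a_t)`, the
hypothesis on `Q_t` replaces it by `Q^{π,γ}(s_t, a_t)`, because the score depends on `(s_t, a_t)`
only. It remains to see that `E[f · ∇ log π(a_t|s_t)] = 0` for `f = b_t` and `f = V^{π,γ}(s_t)`,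
which are functions of `(s_{0:t}, a_{0:t-1})`. Summing the trajectory density over the steps after
`t` leaves the density of the prefix up to time `t`, since each step contributes
`∑ s', P s a s' * ∑ a', π(a'|s') = 1`; in that prefix `a_t` enters only through the factor
`π(a_t|s_t)`, and `∑ a, π(a|s) ∇ log π(a|s) = ∇ ∑ a, π(a|s) = 0`.
-/

lemma Fin.sum_pi_eq_sum_snoc {n : ℕ} {X M : Type*} [Fintype X] [AddCommMonoid M]
    (g : (Fin (n + 1) → X) → M) : ∑ x, g x = ∑ x : Fin n → X, ∑ s, g (Fin.snoc x s) := by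
  rw [← (Fin.snocEquiv fun _ => X).sum_comp, Fintype.sum_prod_type, Finset.sum_comm]
  rfl

lemma Fin.comp_castLE_eq_comp_castLE_iff {X : Type*} {m n : ℕ} (h : m ≤ n) (x x' : Fin n → X) :
    x ∘ Fin.castLE h = x' ∘ Fin.castLE h ↔ ∀ i : Fin n, (i : ℕ) < m → x i = x' i :=
  ⟨fun H i hi => congrFun H ⟨i, hi⟩, fun H => funext fun j => H _ j.isLt⟩

lemma sum_mul_eq_zero_of_sum_eq_zero {ι : Type*} [Fintype ι] {w c : ι → ℝ}
    (hw : ∑ i, w i = 0) (hc : ∀ i j, c i = c j) : ∑ i, w i * c i = 0 := by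
  rcases isEmpty_or_nonempty ι with h | ⟨⟨i₀⟩⟩
  · simp
  · simp_rw [hc _ i₀, ← Finset.sum_mul, hw, zero_mul]

lemma sum_mul_mul_eq_of_condExp {α β : Type*} [Fintype α] [DecidableEq β] (φ : α → β)
    {μ X Y Z : α → ℝ} (hY : ∀ x y, φ x = φ y → Y x = Y y) (hZ : ∀ x y, φ x = φ y → Z x = Z y)
    (hX : ∀ a, ∑ x with φ x = φ a, μ x * X x = (∑ x with φ x = φ a, μ x) * Y a) :
    ∑ x, μ x * (X x * Z x) = ∑ x, μ x * (Y x * Z x) := by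
  have hφ (x : α) (_ : x ∈ univ) : φ x ∈ univ.image φ := mem_image_of_mem φ (mem_univ x)
  rw [← sum_fiberwise_of_maps_to hφ, ← sum_fiberwise_of_maps_to hφ]
  refine sum_congr rfl fun b hb => ?_
  obtain ⟨a, -, rfl⟩ := mem_image.mp hb
  have hfib {W : α → ℝ} (hW : ∀ x y, φ x = φ y → W x = W y) (V : α → ℝ) :
      ∑ x with φ x = φ a, V x * W x = (∑ x with φ x = φ a, V x) * W a := by
    rw [sum_mul]
    exact sum_congr rfl fun x hx => by rw [hW x a (mem_filter.mp hx).2]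
  calc ∑ x with φ x = φ a, μ x * (X x * Z x)
      = (∑ x with φ x = φ a, μ x * X x) * Z a := by simp only [← mul_assoc, hfib hZ]
    _ = ∑ x with φ x = φ a, μ x * (Y x * Z x) := by
      rw [hX, mul_assoc]
      exact (hfib (W := fun x => Y x * Z x) (fun x y h => by rw [hY x y h, hZ x y h]) μ).symm

lemma sum_mul_deriv_log_eq_zero {ι : Type*} [Fintype ι] {p : ℝ → ι → ℝ} {θ : ℝ}
    (hp : ∀ i, p θ i ≠ 0) (hdiff : ∀ i, DifferentiableAt ℝ (fun θ' => p θ' i) θ)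
    (hsum : ∀ θ', ∑ i, p θ' i = 1) :
    ∑ i, p θ i * deriv (fun θ' => Real.log (p θ' i)) θ = 0 := by
  have hscore (i : ι) :
      p θ i * deriv (fun θ' => Real.log (p θ' i)) θ = deriv (fun θ' => p θ' i) θ := by
    rw [deriv.log (hdiff i) (hp i), mul_div_cancel₀ _ (hp i)]
  simp only [hscore, ← deriv_fun_sum fun i _ => hdiff i, hsum, deriv_const]

abbrev Traj (S A : Type*) (n : ℕ) := (Fin (n + 1) → S) × (Fin (n + 1) → A)

namespace Traj

variable {S A : Type*} {m n : ℕ}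

def snoc (ω : Traj S A n) (s : S) (a : A) : Traj S A (n + 1) :=
  (Fin.snoc ω.1 s, Fin.snoc ω.2 a)

def restrict (h : m ≤ n) (ω : Traj S A n) : Traj S A m :=
  (ω.1 ∘ Fin.castLE (Nat.succ_le_succ h), ω.2 ∘ Fin.castLE (Nat.succ_le_succ h))

def extend (n : ℕ) (η : Traj S A m) : Traj S A n :=
  (fun i => η.1 ⟨min i m, Nat.lt_succ_of_le (min_le_right _ _)⟩,
    fun i => η.2 ⟨min i m, Nat.lt_succ_of_le (min_le_right _ _)⟩)

lemma restrict_snoc (h : m ≤ n) (ω : Traj S A n) (s : S) (a : A) :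
    (ω.snoc s a).restrict (h.trans n.le_succ) = ω.restrict h := by
  have hc (i : Fin (m + 1)) : Fin.castLE (Nat.succ_le_succ (h.trans n.le_succ)) i =
      (Fin.castLE (Nat.succ_le_succ h) i).castSucc := rfl
  ext i <;> simp only [restrict, snoc, Function.comp_apply, hc, Fin.snoc_castSucc]

lemma restrict_eq_restrict_iff (h : m ≤ n) {ω ω' : Traj S A n} :
    ω.restrict h = ω'.restrict h ↔
      (∀ i : Fin (n + 1), (i : ℕ) ≤ m → ω.1 i = ω'.1 i) ∧
        (∀ i : Fin (n + 1), (i : ℕ) ≤ m → ω.2 i = ω'.2 i) := by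
  simp only [restrict, Prod.mk.injEq, Fin.comp_castLE_eq_comp_castLE_iff, Nat.lt_succ_iff]

lemma sum_eq_sum_snoc [Fintype S] [Fintype A] {M : Type*} [AddCommMonoid M]
    (F : Traj S A (n + 1) → M) : ∑ ω, F ω = ∑ ω : Traj S A n, ∑ s, ∑ a, F (ω.snoc s a) := by
  rw [Fintype.sum_prod_type, Fin.sum_pi_eq_sum_snoc, Fintype.sum_prod_type]
  refine Finset.sum_congr rfl fun x _ => ?_
  simp only [Fin.sum_pi_eq_sum_snoc (n := n + 1) (X := A), snoc]
  rw [Finset.sum_comm]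

end Traj

section TrajDensity

variable {S A : Type*} {ρ : S → ℝ} {P : S → A → S → ℝ} {pol : ℝ → S → A → ℝ} {θ : ℝ} {n : ℕ}

lemma trajDensity_snoc (ω : Traj S A n) (s : S) (a : A) :
    trajDensity ρ P pol θ (n + 1) (ω.snoc s a) =
      trajDensity ρ P pol θ n ω * (P (ω.1 (Fin.last n)) (ω.2 (Fin.last n)) s * pol θ s a) := by
  simp only [trajDensity, Traj.snoc, Fin.prod_univ_castSucc, Fin.snoc_castSucc, Fin.snoc_last,
    Fin.succ_castSucc, Fin.succ_last]
  rw [show (0 : Fin (n + 2)) = (0 : Fin (n + 1)).castSucc from rfl, Fin.snoc_castSucc]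
  ring

lemma trajDensity_mk_snoc (x : Fin (n + 1) → S) (y : Fin n → A) (a : A) :
    trajDensity ρ P pol θ n (x, Fin.snoc y a) =
      ρ (x 0) * (∏ i, pol θ (x i.castSucc) (y i)) * (∏ i, P (x i.castSucc) (y i) (x i.succ)) *
        pol θ (x (Fin.last n)) a := by
  simp only [trajDensity, Fin.prod_univ_castSucc, Fin.snoc_castSucc, Fin.snoc_last]
  ring

variable [Fintype S] [Fintype A]

lemma sum_sum_trajDensity_snoc (hP1 : ∀ s a, ∑ s', P s a s' = 1)
    (hpol1 : ∀ s, ∑ a, pol θ s a = 1) (ω : Traj S A n) :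
    ∑ s, ∑ a, trajDensity ρ P pol θ (n + 1) (ω.snoc s a) = trajDensity ρ P pol θ n ω := by
  simp only [trajDensity_snoc, ← Finset.mul_sum, hpol1, mul_one, hP1]

lemma sum_trajDensity_mul_restrict (hP1 : ∀ s a, ∑ s', P s a s' = 1)
    (hpol1 : ∀ s, ∑ a, pol θ s a = 1) {m : ℕ} (h : m ≤ n) (F : Traj S A m → ℝ) :
    ∑ ω : Traj S A n, trajDensity ρ P pol θ n ω * F (ω.restrict h) =
      ∑ ω, trajDensity ρ P pol θ m ω * F ω := by
  induction n, h using Nat.le_induction with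
  | base => rfl
  | succ n hmn ih =>
    simp only [Traj.sum_eq_sum_snoc, Traj.restrict_snoc hmn, ← Finset.sum_mul,
      sum_sum_trajDensity_snoc hP1 hpol1, ih]

lemma sum_trajDensity_mul_mul_last_eq_zero {g : S → A → ℝ}
    (hg : ∀ s, ∑ a, pol θ s a * g s a = 0) (F : Traj S A n → ℝ)
    (hF : ∀ ω ω' : Traj S A n, ω.1 = ω'.1 → (∀ i : Fin n, ω.2 i.castSucc = ω'.2 i.castSucc) →
      F ω = F ω') :
    ∑ ω : Traj S A n,
      trajDensity ρ P pol θ n ω * (F ω * g (ω.1 (Fin.last n)) (ω.2 (Fin.last n))) = 0 := by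
  rw [Fintype.sum_prod_type]
  refine Finset.sum_eq_zero fun x _ => ?_
  rw [Fin.sum_pi_eq_sum_snoc]
  refine Finset.sum_eq_zero fun y _ => ?_
  set C := ρ (x 0) * (∏ i, pol θ (x i.castSucc) (y i)) * ∏ i, P (x i.castSucc) (y i) (x i.succ)
  calc _
      = ∑ a, C * (pol θ (x (Fin.last n)) a * g (x (Fin.last n)) a) * F (x, Fin.snoc y a) := by
        simp only [trajDensity_mk_snoc, Fin.snoc_last, C]
        exact Finset.sum_congr rfl fun a _ => by ring
    _ = 0 := by
        refine sum_mul_eq_zero_of_sum_eq_zero (by rw [← Finset.mul_sum, hg, mul_zero]) ?_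
        exact fun a a' => hF _ _ rfl fun i => by simp only [Fin.snoc_castSucc]

lemma sum_trajDensity_mul_mul_eq_zero (hP1 : ∀ s a, ∑ s', P s a s' = 1)
    (hpol1 : ∀ s, ∑ a, pol θ s a = 1) {g : S → A → ℝ} (hg : ∀ s, ∑ a, pol θ s a * g s a = 0)
    {t T : ℕ} (ht : t ≤ T) (f : Traj S A T → ℝ)
    (hf : ∀ ω ω' : Traj S A T, (∀ i : Fin (T + 1), (i : ℕ) ≤ t → ω.1 i = ω'.1 i) →
      (∀ i : Fin (T + 1), (i : ℕ) < t → ω.2 i = ω'.2 i) → f ω = f ω') :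
    ∑ ω : Traj S A T, trajDensity ρ P pol θ T ω *
      (f ω * g (ω.1 ⟨t, Nat.lt_succ_of_le ht⟩) (ω.2 ⟨t, Nat.lt_succ_of_le ht⟩)) = 0 := by
  have hext (ω : Traj S A T) : f ω = f ((ω.restrict ht).extend T) := by
    refine hf _ _ (fun i hi => ?_) (fun i hi => ?_) <;>
      exact congrArg _ (Fin.ext (min_eq_left (by omega)).symm)
  calc _ = ∑ ω : Traj S A T, trajDensity ρ P pol θ T ω *
        (fun η : Traj S A t => f (η.extend T) * g (η.1 (Fin.last t)) (η.2 (Fin.last t)))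
          (ω.restrict ht) :=
        sum_congr rfl fun ω _ => by rw [hext ω]; rfl
    _ = ∑ η : Traj S A t, trajDensity ρ P pol θ t η *
          (f (η.extend T) * g (η.1 (Fin.last t)) (η.2 (Fin.last t))) :=
        sum_trajDensity_mul_restrict hP1 hpol1 ht
          fun η => f (η.extend T) * g (η.1 (Fin.last t)) (η.2 (Fin.last t))
    _ = 0 := by
        refine sum_trajDensity_mul_mul_last_eq_zero hg _ fun η η' hs ha => ?_
        refine hf _ _ (fun i _ => by simp only [Traj.extend, hs]) (fun i hi => ?_)
        simpa [Traj.extend, min_eq_left hi.le] using ha ⟨i, hi⟩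

end TrajDensity

lemma sum_mul_mul_eq_of_condExp_history {S A : Type*} [Fintype S] [Fintype A] [DecidableEq S]
    [DecidableEq A] {t T : ℕ} (ht : t ≤ T) (μ X : Traj S A T → ℝ) (q w : S → A → ℝ)
    (hX : ∀ h : Traj S A T,
      ∑ ω ∈ univ.filter (fun ω : Traj S A T =>
          (∀ i : Fin (T + 1), (i : ℕ) ≤ t → ω.1 i = h.1 i) ∧
          (∀ i : Fin (T + 1), (i : ℕ) ≤ t → ω.2 i = h.2 i)), μ ω * X ω =
        (∑ ω ∈ univ.filter (fun ω : Traj S A T =>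
          (∀ i : Fin (T + 1), (i : ℕ) ≤ t → ω.1 i = h.1 i) ∧
          (∀ i : Fin (T + 1), (i : ℕ) ≤ t → ω.2 i = h.2 i)), μ ω) *
          q (h.1 ⟨t, Nat.lt_succ_of_le ht⟩) (h.2 ⟨t, Nat.lt_succ_of_le ht⟩)) :
    ∑ ω : Traj S A T,
        μ ω * (X ω * w (ω.1 ⟨t, Nat.lt_succ_of_le ht⟩) (ω.2 ⟨t, Nat.lt_succ_of_le ht⟩)) =
      ∑ ω : Traj S A T,
        μ ω * (q (ω.1 ⟨t, Nat.lt_succ_of_le ht⟩) (ω.2 ⟨t, Nat.lt_succ_of_le ht⟩) *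
          w (ω.1 ⟨t, Nat.lt_succ_of_le ht⟩) (ω.2 ⟨t, Nat.lt_succ_of_le ht⟩)) := by
  have hcur (v : S → A → ℝ) (ω ω' : Traj S A T) (h : ω.restrict ht = ω'.restrict ht) :
      v (ω.1 ⟨t, Nat.lt_succ_of_le ht⟩) (ω.2 ⟨t, Nat.lt_succ_of_le ht⟩) =
        v (ω'.1 ⟨t, Nat.lt_succ_of_le ht⟩) (ω'.2 ⟨t, Nat.lt_succ_of_le ht⟩) := by
    obtain ⟨hs, ha⟩ := (Traj.restrict_eq_restrict_iff ht).mp h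
    rw [hs _ le_rfl, ha _ le_rfl]
  refine sum_mul_mul_eq_of_condExp (Traj.restrict ht) (hcur q) (hcur w) fun h => ?_
  rw [filter_congr fun ω _ => Traj.restrict_eq_restrict_iff ht]
  exact hX h

/-- γ-justness (Proposition 1): in a finite-horizon finite MDP, if the advantage
estimator decomposes as `Â_t = Q_t - b_t` where `b_t` depends only on
`(s_{0:t}, a_{0:t-1})` and `Q_t` has conditional expectation `Q^{π,γ}(s_t,a_t)` given
the history up to time `t`, then
`E[Â_t ∇_θ log π_θ(a_t|s_t)] = E[A^{π,γ}(s_t,a_t) ∇_θ log π_θ(a_t|s_t)]`. -/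
theorem gamma_just_advantage_estimator
    {S A : Type*} [Fintype S] [Fintype A] [DecidableEq S] [DecidableEq A]
    (T t : ℕ) (ht : t ≤ T)
    (ρ : S → ℝ)
    (P : S → A → S → ℝ) (hP1 : ∀ s a, ∑ s', P s a s' = 1)
    (pol : ℝ → S → A → ℝ) (hpol : ∀ θ' s a, 0 < pol θ' s a)
    (hpol1 : ∀ θ' s, ∑ a, pol θ' s a = 1)
    (hdiff : ∀ s a, Differentiable ℝ fun θ' => pol θ' s a)
    (rew : S → A → S → ℝ) (γ : ℝ) (θ : ℝ)
    (Qt bt : (Fin (T + 1) → S) × (Fin (T + 1) → A) → ℝ)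
    -- `b_t` depends only on `(s_{0:t}, a_{0:t-1})`:
    (hb : ∀ ω ω' : (Fin (T + 1) → S) × (Fin (T + 1) → A),
      (∀ i : Fin (T + 1), (i : ℕ) ≤ t → ω.1 i = ω'.1 i) →
      (∀ i : Fin (T + 1), (i : ℕ) < t → ω.2 i = ω'.2 i) → bt ω = bt ω')
    -- `E[Q_t | s_t, a_t, history up to t] = Q^{π,γ}(s_t, a_t)`:
    (hQ : ∀ h : (Fin (T + 1) → S) × (Fin (T + 1) → A),
      ∑ ω ∈ univ.filter (fun ω : (Fin (T + 1) → S) × (Fin (T + 1) → A) =>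
          (∀ i : Fin (T + 1), (i : ℕ) ≤ t → ω.1 i = h.1 i) ∧
          (∀ i : Fin (T + 1), (i : ℕ) ≤ t → ω.2 i = h.2 i)),
          trajDensity ρ P pol θ T ω * Qt ω =
      (∑ ω ∈ univ.filter (fun ω : (Fin (T + 1) → S) × (Fin (T + 1) → A) =>
          (∀ i : Fin (T + 1), (i : ℕ) ≤ t → ω.1 i = h.1 i) ∧
          (∀ i : Fin (T + 1), (i : ℕ) ≤ t → ω.2 i = h.2 i)),
          trajDensity ρ P pol θ T ω) *
        Qhor P rew pol θ γ (T - t) (h.1 ⟨t, by omega⟩) (h.2 ⟨t, by omega⟩)) :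
    ∑ ω : (Fin (T + 1) → S) × (Fin (T + 1) → A),
        trajDensity ρ P pol θ T ω * ((Qt ω - bt ω) *
          deriv (fun θ' => Real.log (pol θ' (ω.1 ⟨t, by omega⟩) (ω.2 ⟨t, by omega⟩))) θ) =
      ∑ ω : (Fin (T + 1) → S) × (Fin (T + 1) → A),
        trajDensity ρ P pol θ T ω *
          ((Qhor P rew pol θ γ (T - t) (ω.1 ⟨t, by omega⟩) (ω.2 ⟨t, by omega⟩) -
            ∑ a', pol θ (ω.1 ⟨t, by omega⟩) a' *
              Qhor P rew pol θ γ (T - t) (ω.1 ⟨t, by omega⟩) a') *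
          deriv (fun θ' => Real.log (pol θ' (ω.1 ⟨t, by omega⟩) (ω.2 ⟨t, by omega⟩))) θ) := by
  have hscore (s : S) : ∑ a, pol θ s a * deriv (fun θ' => Real.log (pol θ' s a)) θ = 0 :=
    sum_mul_deriv_log_eq_zero (fun a => (hpol θ s a).ne') (fun a => (hdiff s a).differentiableAt)
      (fun θ' => hpol1 θ' s)
  have hQt := sum_mul_mul_eq_of_condExp_history ht _ Qt _
    (fun s a => deriv (fun θ' => Real.log (pol θ' s a)) θ) hQ
  have hbt := sum_trajDensity_mul_mul_eq_zero (ρ := ρ) hP1 (hpol1 θ) hscore ht bt hb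
  have hV := sum_trajDensity_mul_mul_eq_zero (ρ := ρ) hP1 (hpol1 θ) hscore ht
    (fun ω => ∑ a', pol θ (ω.1 ⟨t, by omega⟩) a' *
      Qhor P rew pol θ γ (T - t) (ω.1 ⟨t, by omega⟩) a')
    fun ω ω' hs _ => by rw [hs _ le_rfl]
  simp only [sub_mul, mul_sub, sum_sub_distrib, hQt, hbt, hV]
end

section
/- Reward shaping leaves the advantage function invariant: in a finite MDP, if r̃(s,a,s') = r(s,a,s') + γΦ(s') - Φ(s), then the shaped value and Q functions satisfy Ṽ^{π,γ}(s) = V^{π,γ}(s) - Φ(s), Q̃^{π,γ}(s,a) = Q^{π,γ}(s,a) - Φ(s), and hence Ã^{π,γ}(s,a) = A^{π,γ}(s,a) for all s, a. -/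
/-- Reward shaping leaves the advantage function invariant: if
`r̃(s,a,s') = r(s,a,s') + γΦ(s') - Φ(s)` then `Ṽ = V - Φ`, `Q̃(s,a) = Q(s,a) - Φ(s)`
and hence `Ã = A`, where the value functions are the (unique) fixed points of the
respective Bellman operators. -/
theorem reward_shaping_preserves_advantage
    {S A : Type*} [Fintype S] [Fintype A]
    (P : S → A → S → ℝ) (hPnn : ∀ s a s', 0 ≤ P s a s') (hP1 : ∀ s a, ∑ s', P s a s' = 1)
    (π : S → A → ℝ) (hπnn : ∀ s a, 0 ≤ π s a) (hπ1 : ∀ s, ∑ a, π s a = 1)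
    (r : S → A → S → ℝ) (γ : ℝ) (hγ0 : 0 ≤ γ) (hγ1 : γ < 1)
    (Φ : S → ℝ)
    (rt : S → A → S → ℝ) (hrt : ∀ s a s', rt s a s' = r s a s' + γ * Φ s' - Φ s)
    (V : S → ℝ)
    (hV : ∀ s, V s = ∑ a, π s a * ∑ s', P s a s' * (r s a s' + γ * V s'))
    (Vt : S → ℝ)
    (hVt : ∀ s, Vt s = ∑ a, π s a * ∑ s', P s a s' * (rt s a s' + γ * Vt s'))
    (Q : S → A → ℝ) (hQ : ∀ s a, Q s a = ∑ s', P s a s' * (r s a s' + γ * V s'))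
    (Qt : S → A → ℝ) (hQt : ∀ s a, Qt s a = ∑ s', P s a s' * (rt s a s' + γ * Vt s')) :
    (∀ s, Vt s = V s - Φ s) ∧ (∀ s a, Qt s a = Q s a - Φ s) ∧
      (∀ s a, Qt s a - Vt s = Q s a - V s) := by
  set D : S → ℝ := fun s => Vt s - (V s - Φ s) with hDdef
  -- key sum identity
  have hsum : ∀ s a, ∑ s', P s a s' * (rt s a s' + γ * Vt s')
      = (∑ s', P s a s' * (r s a s' + γ * V s')) - Φ s
        + γ * ∑ s', P s a s' * D s' := by
    intro s a
    have h1 : ∑ s', P s a s' * (rt s a s' + γ * Vt s')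
        = ∑ s', (P s a s' * (r s a s' + γ * V s') - P s a s' * Φ s
            + γ * (P s a s' * D s')) := by
      apply Finset.sum_congr rfl
      intro s' _
      rw [hrt]
      simp only [hDdef]
      ring
    rw [h1, Finset.sum_add_distrib, Finset.sum_sub_distrib, ← Finset.sum_mul, hP1,
      ← Finset.mul_sum]
    ring
  -- Bellman-type equation for D
  have hD : ∀ s, D s = γ * ∑ a, π s a * ∑ s', P s a s' * D s' := by
    intro s
    have h1 : Vt s = ∑ a, π s a * ((∑ s', P s a s' * (r s a s' + γ * V s')) - Φ s
        + γ * ∑ s', P s a s' * D s') := by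
      rw [hVt]
      exact Finset.sum_congr rfl fun a _ => by rw [hsum]
    have h2 : ∀ a, π s a * ((∑ s', P s a s' * (r s a s' + γ * V s')) - Φ s
        + γ * ∑ s', P s a s' * D s')
        = π s a * (∑ s', P s a s' * (r s a s' + γ * V s')) - π s a * Φ s
          + γ * (π s a * ∑ s', P s a s' * D s') := fun a => by ring
    simp only [hDdef]
    rw [h1, Finset.sum_congr rfl fun a _ => h2 a, Finset.sum_add_distrib,
      Finset.sum_sub_distrib, ← Finset.sum_mul, hπ1, ← Finset.mul_sum, hV]
    ring
  -- D vanishes, by a sup-norm contraction argument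
  have hDzero : ∀ s, D s = 0 := by
    intro s
    obtain ⟨s0, -, hs0⟩ := Finset.exists_max_image Finset.univ (fun t => |D t|)
      ⟨s, Finset.mem_univ s⟩
    have hM : ∀ t, |D t| ≤ |D s0| := fun t => hs0 t (Finset.mem_univ t)
    have hinner : ∀ a, |∑ s', P s0 a s' * D s'| ≤ |D s0| := by
      intro a
      calc |∑ s', P s0 a s' * D s'| ≤ ∑ s', |P s0 a s' * D s'| :=
            Finset.abs_sum_le_sum_abs _ _
        _ ≤ ∑ s', P s0 a s' * |D s0| := by
            apply Finset.sum_le_sum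
            intro s' _
            rw [abs_mul, abs_of_nonneg (hPnn _ _ _)]
            exact mul_le_mul_of_nonneg_left (hM s') (hPnn _ _ _)
        _ = |D s0| := by rw [← Finset.sum_mul, hP1, one_mul]
    have hb : |D s0| ≤ γ * |D s0| := by
      calc |D s0| = γ * |∑ a, π s0 a * ∑ s', P s0 a s' * D s'| := by
            rw [hD s0, abs_mul, abs_of_nonneg hγ0]
        _ ≤ γ * |D s0| := by
            apply mul_le_mul_of_nonneg_left _ hγ0
            calc |∑ a, π s0 a * ∑ s', P s0 a s' * D s'|
                ≤ ∑ a, |π s0 a * ∑ s', P s0 a s' * D s'| :=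
                  Finset.abs_sum_le_sum_abs _ _
              _ ≤ ∑ a, π s0 a * |D s0| := by
                  apply Finset.sum_le_sum
                  intro a _
                  rw [abs_mul, abs_of_nonneg (hπnn _ _)]
                  exact mul_le_mul_of_nonneg_left (hinner a) (hπnn _ _)
              _ = |D s0| := by rw [← Finset.sum_mul, hπ1, one_mul]
    have h0 : |D s0| ≤ 0 := by nlinarith [abs_nonneg (D s0)]
    have : |D s| ≤ 0 := le_trans (hM s) h0
    exact abs_eq_zero.mp (le_antisymm this (abs_nonneg _))
  have hVeq : ∀ s, Vt s = V s - Φ s := by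
    intro s
    have := hDzero s
    simp only [hDdef] at this
    linarith
  refine ⟨hVeq, ?_, ?_⟩
  · intro s a
    have hg : ∑ s', P s a s' * D s' = 0 := by
      apply Finset.sum_eq_zero
      intro s' _
      rw [hDzero s', mul_zero]
    rw [hQt, hsum, hg, hQ]
    ring
  · intro s a
    have hg : ∑ s', P s a s' * D s' = 0 := by
      apply Finset.sum_eq_zero
      intro s' _
      rw [hDzero s', mul_zero]
    rw [hQt, hsum, hg, hQ, hVeq]
    ring
end
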